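/- Let G = (P, L) be any Fischer space, ℓ = {a,b,c} a line, and P₀ the set of points not collinear with any of a, b, c. If v, w ∈ P₀ are distinct collinear points, then v∧w ∈ P₀. -/

import Mathlib

/-- A partial triple system, given by a collinearity relation `col` and a map `third`
sending two distinct collinear points to the third point on their line. -/
structure IsPTS {P : Type*} (col : P → P → Prop) (third : P → P → P) : Prop where
  symm : ∀ x y, col x y → col y x
  irrefl : ∀ x, ¬ col x x
  third_symm : ∀ x y, col x y → third x y = third y x
  col_third : ∀ x y, col x y → col x (third x y)
  third_ne_left : ∀ x y, col x y → third x y ≠ x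
  third_ne_right : ∀ x y, col x y → third x y ≠ y
  third_third : ∀ x y, col x y → third x (third x y) = y
  unique_line : ∀ x y u v, col x y → col u v →
    x ∈ ({u, v, third u v} : Set P) → y ∈ ({u, v, third u v} : Set P) →
    ({x, y, third x y} : Set P) = {u, v, third u v}

/-- A subspace of a partial triple system: a set of points closed under taking
the third point of a line through two of its points. -/
def IsSubspace {P : Type*} (col : P → P → Prop) (third : P → P → P) (S : Set P) : Prop :=
  ∀ x ∈ S, ∀ y ∈ S, col x y → third x y ∈ S

/-- The subspace generated by a set of points. -/
def fclosure {P : Type*} (col : P → P → Prop) (third : P → P → P) (T : Set P) : Set P :=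
  ⋂₀ {S | T ⊆ S ∧ IsSubspace col third S}

/-- The line through two distinct collinear points, as a set. -/
def lineSet {P : Type*} (third : P → P → P) (x y : P) : Set P := {x, y, third x y}

/-- The six points of the complete quadrilateral (dual affine plane of order 2). -/
inductive CQPt | A | B | C | X | Y | Z
deriving DecidableEq

/-- The "opposite point" involution of the complete quadrilateral. -/
def CQPt.opp : CQPt → CQPt
  | .A => .X | .X => .A | .B => .Y | .Y => .B | .C => .Z | .Z => .C

/-- Collinearity in the complete quadrilateral with lines
{A,B,C}, {A,Y,Z}, {B,X,Z}, {C,X,Y}: two points are collinear iff they are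
distinct and not opposite. -/
def CQPt.col (p q : CQPt) : Prop := p ≠ q ∧ q ≠ p.opp

/-- The third point on the line through two distinct collinear points of the
complete quadrilateral. -/
def CQPt.third : CQPt → CQPt → CQPt
  | .A, .B => .C | .B, .A => .C | .A, .C => .B | .C, .A => .B | .B, .C => .A | .C, .B => .A
  | .A, .Y => .Z | .Y, .A => .Z | .A, .Z => .Y | .Z, .A => .Y | .Y, .Z => .A | .Z, .Y => .A
  | .B, .X => .Z | .X, .B => .Z | .B, .Z => .X | .Z, .B => .X | .X, .Z => .B | .Z, .X => .B
  | .C, .X => .Y | .X, .C => .Y | .C, .Y => .X | .Y, .C => .X | .X, .Y => .C | .Y, .X => .C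
  | p, _ => p

/-- A set of points is a complete quadrilateral if it is the isomorphic image of
the standard one (preserving collinearity and the `third` operation). -/
def IsCQSet {P : Type*} (col : P → P → Prop) (third : P → P → P) (S : Set P) : Prop :=
  ∃ f : CQPt → P, Function.Injective f ∧ Set.range f = S ∧
    (∀ u v, col (f u) (f v) ↔ CQPt.col u v) ∧
    (∀ u v, CQPt.col u v → f (CQPt.third u v) = third (f u) (f v))

/-- A set of points is an affine plane of order 3 if it is the isomorphic image of
`AG(2,3)` (any two distinct points collinear, third point `-(u+v)`). -/
def IsAPSet {P : Type*} (col : P → P → Prop) (third : P → P → P) (S : Set P) : Prop :=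
  ∃ f : ZMod 3 × ZMod 3 → P, Function.Injective f ∧ Set.range f = S ∧
    (∀ u v, col (f u) (f v) ↔ u ≠ v) ∧
    (∀ u v, u ≠ v → f (-(u + v)) = third (f u) (f v))

/-- A Fischer space: a partial triple system in which the subspace generated by two
distinct intersecting lines is a complete quadrilateral or an affine plane of order 3. -/
structure IsFischer {P : Type*} (col : P → P → Prop) (third : P → P → P)
    extends IsPTS col third : Prop where
  dichotomy : ∀ x y u v, col x y → col u v →
    lineSet third x y ≠ lineSet third u v →
    (lineSet third x y ∩ lineSet third u v).Nonempty →
    IsCQSet col third (fclosure col third (lineSet third x y ∪ lineSet third u v)) ∨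
    IsAPSet col third (fclosure col third (lineSet third x y ∪ lineSet third u v))

/-- A Fischer space of symplectic type: the subspace generated by two distinct
intersecting lines is always a complete quadrilateral. -/
structure IsSymplectic {P : Type*} (col : P → P → Prop) (third : P → P → P)
    extends IsPTS col third : Prop where
  cq : ∀ x y u v, col x y → col u v →
    lineSet third x y ≠ lineSet third u v →
    (lineSet third x y ∩ lineSet third u v).Nonempty →
    IsCQSet col third (fclosure col third (lineSet third x y ∪ lineSet third u v))

instance : Fintype CQPt :=
  ⟨{CQPt.A, CQPt.B, CQPt.C, CQPt.X, CQPt.Y, CQPt.Z}, fun x => by cases x <;> decide⟩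

instance : ∀ p q : CQPt, Decidable (CQPt.col p q) :=
  fun p q => inferInstanceAs (Decidable (p ≠ q ∧ q ≠ p.opp))

lemma cq_aux : ∀ p' v' w' : CQPt, CQPt.col v' w' → CQPt.col p' (CQPt.third v' w') →
    CQPt.col p' v' ∨ CQPt.col p' w' ∨ p' = v' ∨ p' = w' := by decide

lemma key_lemma {P : Type*} (col : P → P → Prop) (third : P → P → P)
    (hF : IsFischer col third) (v w p : P) (hvw : col v w)
    (h1 : ¬ col p v) (h2 : ¬ col p w) : ¬ col p (third v w) := by
  intro hpu
  set u := third v w with hu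
  have hpts := hF.toIsPTS
  have hup : col u p := hpts.symm _ _ hpu
  have hpv : p ≠ v := fun h => h2 (h ▸ hvw)
  have hpw : p ≠ w := fun h => h1 (h ▸ hpts.symm v w hvw)
  have hpu' : p ≠ u := fun h => hpts.irrefl u (h ▸ hpu)
  have hlinene : lineSet third v w ≠ lineSet third u p := by
    intro h
    have : p ∈ lineSet third v w := by
      rw [h]; exact Or.inr (Or.inl rfl)
    rcases this with h|h|h
    · exact hpv h
    · exact hpw h
    · exact hpu' h
  have hint : (lineSet third v w ∩ lineSet third u p).Nonempty :=
    ⟨u, Or.inr (Or.inr rfl), Or.inl rfl⟩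
  have hsub : lineSet third v w ∪ lineSet third u p ⊆
      fclosure col third (lineSet third v w ∪ lineSet third u p) :=
    fun x hx S hS => hS.1 hx
  rcases hF.dichotomy v w u p hvw hup hlinene hint with
    ⟨f, hfinj, hfrange, hfcol, hfthird⟩ | ⟨f, hfinj, hfrange, hfcol, hfthird⟩
  · -- complete quadrilateral case
    obtain ⟨v', hv'⟩ : v ∈ Set.range f := by
      rw [hfrange]; exact hsub (Or.inl (Or.inl rfl))
    obtain ⟨w', hw'⟩ : w ∈ Set.range f := by
      rw [hfrange]; exact hsub (Or.inl (Or.inr (Or.inl rfl)))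
    obtain ⟨u', hu'⟩ : u ∈ Set.range f := by
      rw [hfrange]; exact hsub (Or.inl (Or.inr (Or.inr rfl)))
    obtain ⟨p', hp'⟩ : p ∈ Set.range f := by
      rw [hfrange]; exact hsub (Or.inr (Or.inr (Or.inl rfl)))
    have hcvw : CQPt.col v' w' := (hfcol v' w').mp (by rw [hv', hw']; exact hvw)
    have hthird : CQPt.third v' w' = u' := hfinj (by rw [hfthird v' w' hcvw, hv', hw', hu'])
    have hcpu : CQPt.col p' u' := (hfcol p' u').mp (by rw [hp', hu']; exact hpu)
    rcases cq_aux p' v' w' hcvw (hthird ▸ hcpu) with h|h|h|h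
    · exact h1 (by rw [← hp', ← hv']; exact (hfcol p' v').mpr h)
    · exact h2 (by rw [← hp', ← hw']; exact (hfcol p' w').mpr h)
    · exact hpv (by rw [← hp', ← hv', h])
    · exact hpw (by rw [← hp', ← hw', h])
  · -- affine plane case
    obtain ⟨v', hv'⟩ : v ∈ Set.range f := by
      rw [hfrange]; exact hsub (Or.inl (Or.inl rfl))
    obtain ⟨p', hp'⟩ : p ∈ Set.range f := by
      rw [hfrange]; exact hsub (Or.inr (Or.inr (Or.inl rfl)))
    have hne : p' ≠ v' := fun h => hpv (by rw [← hp', ← hv', h])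
    exact h1 (by rw [← hp', ← hv']; exact (hfcol p' v').mpr hne)

/-- Let `G` be any Fischer space, ℓ the line through the collinear points `a, b`
(so ℓ = {a, b, a∧b}), and `P₀` the set of points not collinear with any point of ℓ.
If `v, w ∈ P₀` are collinear, then `v ∧ w ∈ P₀`; that is, `P₀` is closed under `∧`. -/
theorem stmt13 {P : Type*} (col : P → P → Prop) (third : P → P → P)
    (hF : IsFischer col third)
    (a b : P) (hab : col a b)
    (P0 : Set P)
    (hP0 : P0 = {p : P | ¬ col p a ∧ ¬ col p b ∧ ¬ col p (third a b)})
    (v w : P) (hv : v ∈ P0) (hw : w ∈ P0) (hvw : col v w) :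
    third v w ∈ P0 := by
  subst hP0
  obtain ⟨hva, hvb, hvc⟩ := hv
  obtain ⟨hwa, hwb, hwc⟩ := hw
  have S := hF.symm
  refine ⟨fun h => ?_, fun h => ?_, fun h => ?_⟩
  · exact key_lemma col third hF v w a hvw (fun h' => hva (S _ _ h'))
      (fun h' => hwa (S _ _ h')) (S _ _ h)
  · exact key_lemma col third hF v w b hvw (fun h' => hvb (S _ _ h'))
      (fun h' => hwb (S _ _ h')) (S _ _ h)
  · exact key_lemma col third hF v w (third a b) hvw (fun h' => hvc (S _ _ h'))
      (fun h' => hwc (S _ _ h')) (S _ _ h)
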